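/- Let λ be a partition of n, let T be a standard Young tableau of shape λ, and suppose the entry n of T occupies the box in row i and column j. Let T' be the standard Young tableau of shape λ minus that box obtained by removing the box containing n. Then in 𝒵 one has ∂(y_T) = (t + j − i)·y_{T'}. -/

import Mathlib

open Polynomial

/-- `𝒵_n = K[t][Σ_n]`, the group algebra of the symmetric group on `n` letters
over the polynomial ring `K[t]`. -/
abbrev Zn (K : Type) [Field K] (n : ℕ) : Type :=
  MonoidAlgebra (Polynomial K) (Equiv.Perm (Fin n))

/-- `KΣ_n`, the group algebra of the symmetric group over `K`. -/
abbrev GA (K : Type) [Field K] (n : ℕ) : Type :=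
  MonoidAlgebra K (Equiv.Perm (Fin n))

/-- The basis element `[σ]` of `𝒵_n`. -/
noncomputable def zbasis {K : Type} [Field K] {n : ℕ} (σ : Equiv.Perm (Fin n)) : Zn K n :=
  MonoidAlgebra.single σ 1

/-- For `σ ∈ Σ_{n+1}`, the permutation `τ ∈ Σ_n` with `τ (σ⁻¹ n) = σ n` and
`τ k = σ k` for all other `k`; if `σ` fixes the last point this is the
restriction of `σ`. -/
def reduceLast {n : ℕ} (σ : Equiv.Perm (Fin (n + 1))) : Equiv.Perm (Fin n) :=
  Equiv.removeNone (finSuccEquivLast.permCongr σ)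

/-- The contraction `∂ : 𝒵_{n+1} → 𝒵_n`: the `K[t]`-linear map with
`∂[σ] = t·[σ']` if `σ` fixes the last point (`σ'` the restriction) and
`∂[σ] = [reduceLast σ]` otherwise. -/
noncomputable def contractZ {K : Type} [Field K] {n : ℕ} (a : Zn K (n + 1)) : Zn K n :=
  Finsupp.sum a.coeff fun σ f =>
    MonoidAlgebra.single (reduceLast σ)
      ((if σ (Fin.last n) = Fin.last n then (X : Polynomial K) else 1) * f)

/-- `σ ⊕ τ ∈ Σ_{p+q}`: acts as `σ` on the first `p` letters and as the
shift of `τ` on the last `q` letters. -/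
def permShift {p q : ℕ} (σ : Equiv.Perm (Fin p)) (τ : Equiv.Perm (Fin q)) :
    Equiv.Perm (Fin (p + q)) :=
  finSumFinEquiv.permCongr (Equiv.sumCongr σ τ)

/-- The tensor product `⊗ : 𝒵_p × 𝒵_q → 𝒵_{p+q}`, the `K[t]`-bilinear map with
`[σ] ⊗ [τ] = [σ ⊕ τ]`. -/
noncomputable def ztensor {K : Type} [Field K] {p q : ℕ} (a : Zn K p) (b : Zn K q) :
    Zn K (p + q) :=
  Finsupp.sum a.coeff fun σ f => Finsupp.sum b.coeff fun τ g =>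
    MonoidAlgebra.single (permShift σ τ) (f * g)

/-- An ideal of the wheeled PROP `𝒵`: a family `I_n ⊆ 𝒵_n` such that each `I_n` is a
two-sided ideal of the ring `K[t][Σ_n]`, closed under tensoring (on either side) with
arbitrary elements, and closed under contraction. -/
structure ZIdeal (K : Type) [Field K] where
  carrier : ∀ n : ℕ, Set (Zn K n)
  zero_mem : ∀ n : ℕ, (0 : Zn K n) ∈ carrier n
  add_mem : ∀ (n : ℕ) (a b : Zn K n), a ∈ carrier n → b ∈ carrier n → a + b ∈ carrier n
  neg_mem : ∀ (n : ℕ) (a : Zn K n), a ∈ carrier n → -a ∈ carrier n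
  mul_mem_left : ∀ (n : ℕ) (r a : Zn K n), a ∈ carrier n → r * a ∈ carrier n
  mul_mem_right : ∀ (n : ℕ) (r a : Zn K n), a ∈ carrier n → a * r ∈ carrier n
  tensor_mem_left : ∀ (p q : ℕ) (a : Zn K p) (b : Zn K q),
    a ∈ carrier p → ztensor a b ∈ carrier (p + q)
  tensor_mem_right : ∀ (p q : ℕ) (a : Zn K p) (b : Zn K q),
    a ∈ carrier p → ztensor b a ∈ carrier (q + p)
  contract_mem : ∀ (n : ℕ) (a : Zn K (n + 1)), a ∈ carrier (n + 1) → contractZ a ∈ carrier n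

/-- A nonzero ideal of `𝒵`. -/
def ZIdeal.Nonzero {K : Type} [Field K] (I : ZIdeal K) : Prop :=
  ∃ (d : ℕ) (a : Zn K d), a ∈ I.carrier d ∧ a ≠ 0

/-- A standard Young tableau of shape `μ` with entries in `Fin n`:
a bijection from the cells of `μ` to `Fin n` (thought of as the entries `1,…,n`)
that increases along rows and columns.  (Coordinates of cells are 0-indexed,
in matrix convention: `(i, j)` is row `i`, column `j`.) -/
structure SYT (μ : YoungDiagram) (n : ℕ) where
  toEquiv : {c : ℕ × ℕ // c ∈ μ} ≃ Fin n
  row_lt : ∀ c d : {c : ℕ × ℕ // c ∈ μ},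
    c.1.1 = d.1.1 → c.1.2 < d.1.2 → toEquiv c < toEquiv d
  col_lt : ∀ c d : {c : ℕ × ℕ // c ∈ μ},
    c.1.2 = d.1.2 → c.1.1 < d.1.1 → toEquiv c < toEquiv d

/-- `σ` belongs to the row stabilizer `R(T)` of the tableau `T`. -/
def isRowStab {μ : YoungDiagram} {n : ℕ} (T : SYT μ n) (σ : Equiv.Perm (Fin n)) : Prop :=
  ∀ k : Fin n, (T.toEquiv.symm (σ k)).1.1 = (T.toEquiv.symm k).1.1

/-- `σ` belongs to the column stabilizer `C(T)` of the tableau `T`. -/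
def isColStab {μ : YoungDiagram} {n : ℕ} (T : SYT μ n) (σ : Equiv.Perm (Fin n)) : Prop :=
  ∀ k : Fin n, (T.toEquiv.symm (σ k)).1.2 = (T.toEquiv.symm k).1.2

open Classical in
/-- The Young symmetrizer `y_T = Σ_{σ ∈ R(T), π ∈ C(T)} sgn(π)·[π σ]`, with
coefficients in a commutative ring `R`. -/
noncomputable def ySym (R : Type) [CommRing R] {μ : YoungDiagram} {n : ℕ} (T : SYT μ n) :
    MonoidAlgebra R (Equiv.Perm (Fin n)) :=
  ∑ σ : Equiv.Perm (Fin n), ∑ π : Equiv.Perm (Fin n),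
    if isRowStab T σ ∧ isColStab T π then
      MonoidAlgebra.single (π * σ) (((Equiv.Perm.sign π : ℤ) : R))
    else 0

/-- The two-sided span `A·S·A` of a subset `S` of a `K`-algebra `A`,
as a `K`-subspace. -/
noncomputable def twoSidedSpan {K : Type} [Field K] {A : Type} [Ring A] [Algebra K A]
    (S : Set A) : Submodule K A :=
  Submodule.span K {x | ∃ a b : A, ∃ s ∈ S, x = a * s * b}

/-- The simple two-sided ideal `J_λ = KΣ_n · y_T · KΣ_n ⊆ KΣ_n` attached to a
partition (Young diagram) `μ`; it does not depend on the choice of a standard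
Young tableau `T` of shape `μ`, so we take the supremum over all of them. -/
noncomputable def Jideal (K : Type) [Field K] (n : ℕ) (μ : YoungDiagram) :
    Submodule K (GA K n) :=
  ⨆ T : SYT μ n, twoSidedSpan {ySym K T}

/-- The embedding `KΣ_n → K[t][Σ_n]` (coefficientwise `K → K[t]`). -/
noncomputable def embZ (K : Type) [Field K] (n : ℕ) : GA K n →ₗ[K] Zn K n :=
  (MonoidAlgebra.coeffLinearEquiv K).symm.toLinearMap ∘ₗ
    Finsupp.mapRange.linearMap (Algebra.linearMap K (Polynomial K)) ∘ₗ
    (MonoidAlgebra.coeffLinearEquiv K).toLinearMap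

/-- `J_λ`, regarded inside `𝒵_n = K[t][Σ_n]` (as a `K`-subspace). -/
noncomputable def JZ (K : Type) [Field K] (n : ℕ) (μ : YoungDiagram) :
    Submodule K (Zn K n) :=
  Submodule.map (embZ K n) (Jideal K n μ)

/-- `L·J_λ ⊆ 𝒵_n`: the `K`-span of products `f • x` with `f ∈ L ⊆ K[t]`, `x ∈ J_λ`. -/
noncomputable def LJ (K : Type) [Field K] (n : ℕ) (L : Ideal (Polynomial K))
    (μ : YoungDiagram) : Submodule K (Zn K n) :=
  Submodule.span K {x | ∃ f ∈ L, ∃ y ∈ JZ K n μ, x = f • y}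

/-- The partitions of `n`, as Young diagrams with `n` cells. -/
def Par (n : ℕ) : Type := {μ : YoungDiagram // μ.card = n}

/-- `I_n` decomposes as the direct sum `⊕_{λ ⊢ n} L_λ·J_λ`. -/
def IsDecomp (K : Type) [Field K] (n : ℕ) (S : Set (Zn K n))
    (L : Par n → Ideal (Polynomial K)) : Prop :=
  S = ↑(⨆ μ : Par n, LJ K n (L μ) μ.1) ∧ iSupIndep fun μ : Par n => LJ K n (L μ) μ.1

/-- For a monic `f ∈ K[t]` and a finite set `C` of boxes, the polynomial
`g_λ = f · ∏_{(i,j) ∈ C, (i,j) ∉ λ} (t + j − i)`. -/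
noncomputable def gOf (K : Type) [Field K] (f : Polynomial K) (C : Finset (ℕ × ℕ))
    (μ : YoungDiagram) : Polynomial K :=
  f * ∏ c ∈ C.filter (fun c => c ∉ μ), ((X : Polynomial K) + (c.2 : Polynomial K) - (c.1 : Polynomial K))

/-- The `n`-th piece of the ideal `I(f, C)` of `𝒵`:
`I(f,C)_n = ⊕_{λ ⊢ n} (g_λ)·J_λ`. -/
noncomputable def IfcCarrier (K : Type) [Field K] (f : Polynomial K) (C : Finset (ℕ × ℕ))
    (n : ℕ) : Set (Zn K n) :=
  ↑(⨆ μ : Par n, LJ K n (Ideal.span {gOf K f C μ.1}) μ.1)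

section PermLemmas

open Equiv Fin

variable {n : ℕ}

/-- Extension of a permutation of `Fin n` to `Fin (n+1)` fixing the last point. -/
def extPerm (g : Equiv.Perm (Fin n)) : Equiv.Perm (Fin (n + 1)) :=
  finSuccEquivLast.permCongr.symm g.optionCongr

lemma extPerm_apply_castSucc (g : Equiv.Perm (Fin n)) (k : Fin n) :
    extPerm g (Fin.castSucc k) = Fin.castSucc (g k) := by
  simp [extPerm, Equiv.permCongr_apply]

lemma extPerm_apply_last (g : Equiv.Perm (Fin n)) :
    extPerm g (Fin.last n) = Fin.last n := by
  simp [extPerm, Equiv.permCongr_apply]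

lemma extPerm_one : extPerm (1 : Equiv.Perm (Fin n)) = 1 := by
  ext x
  cases x using Fin.lastCases with
  | last => simp [extPerm_apply_last]
  | cast k => simp [extPerm_apply_castSucc]

lemma extPerm_mul (g h : Equiv.Perm (Fin n)) :
    extPerm (g * h) = extPerm g * extPerm h := by
  ext x
  cases x using Fin.lastCases with
  | last => simp [extPerm_apply_last, Equiv.Perm.mul_apply]
  | cast k => simp [extPerm_apply_castSucc, Equiv.Perm.mul_apply]

lemma reduceLast_extPerm (g : Equiv.Perm (Fin n)) : reduceLast (extPerm g) = g := by
  unfold _root_.reduceLast extPerm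
  rw [Equiv.apply_symm_apply, Equiv.removeNone_optionCongr]

lemma sign_extPerm (g : Equiv.Perm (Fin n)) :
    Equiv.Perm.sign (extPerm g) = Equiv.Perm.sign g := by
  unfold extPerm
  rw [Equiv.permCongr_symm, Equiv.Perm.sign_permCongr, Equiv.optionCongr_sign]

lemma reduceLast_apply_ne (σ : Equiv.Perm (Fin (n + 1))) (k : Fin n)
    (h : σ (Fin.castSucc k) ≠ Fin.last n) :
    Fin.castSucc (reduceLast σ k) = σ (Fin.castSucc k) := by
  have hex : ∃ x', (finSuccEquivLast.permCongr σ) (some k) = some x' := by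
    refine ⟨(σ (Fin.castSucc k)).castPred h, ?_⟩
    simp [Equiv.permCongr_apply, ← finSuccEquivLast_castSucc, Fin.castSucc_castPred]
  have := Equiv.removeNone_some _ hex
  have h2 : (finSuccEquivLast.permCongr σ) (some k) = finSuccEquivLast (σ (Fin.castSucc k)) := by
    simp [Equiv.permCongr_apply]
  rw [h2] at this
  have := congrArg finSuccEquivLast.symm this
  simpa [_root_.reduceLast] using this

lemma reduceLast_apply_eq (σ : Equiv.Perm (Fin (n + 1))) (k : Fin n)
    (h : σ (Fin.castSucc k) = Fin.last n) :
    Fin.castSucc (reduceLast σ k) = σ (Fin.last n) := by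
  have hnone : (finSuccEquivLast.permCongr σ) (some k) = none := by
    simp [Equiv.permCongr_apply, h]
  have := Equiv.removeNone_none _ hnone
  have h2 : (finSuccEquivLast.permCongr σ) none = finSuccEquivLast (σ (Fin.last n)) := by
    simp [Equiv.permCongr_apply]
  rw [h2] at this
  have := congrArg finSuccEquivLast.symm this
  simpa [_root_.reduceLast] using this

end PermLemmas
section PermLemmas2

open Equiv Fin

variable {n : ℕ}

lemma apply_last_ne_last {σ : Equiv.Perm (Fin (n + 1))} {k : Fin n}
    (h : σ (Fin.castSucc k) = Fin.last n) : σ (Fin.last n) ≠ Fin.last n := by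
  intro hc
  have := σ.injective (h.trans hc.symm)
  exact absurd this (Fin.castSucc_lt_last k).ne

lemma extPerm_reduceLast {σ : Equiv.Perm (Fin (n + 1))} (h : σ (Fin.last n) = Fin.last n) :
    extPerm (reduceLast σ) = σ := by
  ext x
  cases x using Fin.lastCases with
  | last => rw [extPerm_apply_last, h]
  | cast k =>
    rw [extPerm_apply_castSucc]
    by_cases hk : σ (Fin.castSucc k) = Fin.last n
    · exact absurd h (apply_last_ne_last hk)
    · rw [reduceLast_apply_ne σ k hk]

lemma reduceLast_mul_extPerm (σ : Equiv.Perm (Fin (n + 1))) (g : Equiv.Perm (Fin n)) :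
    reduceLast (σ * extPerm g) = reduceLast σ * g := by
  refine Equiv.ext fun k => ?_
  rw [← Fin.castSucc_inj]
  have hsg : (σ * extPerm g) (Fin.castSucc k) = σ (Fin.castSucc (g k)) := by
    rw [Equiv.Perm.mul_apply, extPerm_apply_castSucc]
  by_cases h : σ (Fin.castSucc (g k)) = Fin.last n
  · rw [Equiv.Perm.mul_apply, reduceLast_apply_eq _ _ (by rw [hsg]; exact h),
      reduceLast_apply_eq σ (g k) h, Equiv.Perm.mul_apply, extPerm_apply_last]
  · rw [Equiv.Perm.mul_apply, reduceLast_apply_ne _ _ (by rw [hsg]; exact h),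
      reduceLast_apply_ne σ (g k) h, hsg]

lemma reduceLast_extPerm_mul (g : Equiv.Perm (Fin n)) (σ : Equiv.Perm (Fin (n + 1))) :
    reduceLast (extPerm g * σ) = g * reduceLast σ := by
  refine Equiv.ext fun k => ?_
  rw [← Fin.castSucc_inj]
  by_cases h : σ (Fin.castSucc k) = Fin.last n
  · have h1 : (extPerm g * σ) (Fin.castSucc k) = Fin.last n := by
      rw [Equiv.Perm.mul_apply, h, extPerm_apply_last]
    rw [reduceLast_apply_eq _ _ h1, Equiv.Perm.mul_apply, Equiv.Perm.mul_apply,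
      ← reduceLast_apply_eq σ k h, extPerm_apply_castSucc]
  · have h1 : (extPerm g * σ) (Fin.castSucc k) ≠ Fin.last n := by
      rw [Equiv.Perm.mul_apply]
      obtain ⟨m, hm⟩ := Fin.exists_castSucc_eq.mpr h
      rw [← hm, extPerm_apply_castSucc]
      exact (Fin.castSucc_lt_last _).ne
    rw [reduceLast_apply_ne _ _ h1, Equiv.Perm.mul_apply, Equiv.Perm.mul_apply,
      ← reduceLast_apply_ne σ k h, extPerm_apply_castSucc]

lemma reduceLast_swap_last (v : Fin (n + 1)) :
    reduceLast (Equiv.swap v (Fin.last n)) = 1 := by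
  refine Equiv.ext fun k => ?_
  rw [← Fin.castSucc_inj, Equiv.Perm.one_apply]
  by_cases h : Fin.castSucc k = v
  · have h1 : Equiv.swap v (Fin.last n) (Fin.castSucc k) = Fin.last n := by
      rw [h, Equiv.swap_apply_left]
    rw [reduceLast_apply_eq _ _ h1, Equiv.swap_apply_right]
    exact h.symm
  · have h1 : Equiv.swap v (Fin.last n) (Fin.castSucc k) = Fin.castSucc k := by
      rw [Equiv.swap_apply_of_ne_of_ne h (Fin.castSucc_lt_last _).ne]
    rw [reduceLast_apply_ne _ _ (by rw [h1]; exact (Fin.castSucc_lt_last _).ne), h1]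

lemma reduceLast_swap_mul_swap (u v : Fin n) (huv : u ≠ v) :
    reduceLast (Equiv.swap (Fin.castSucc u) (Fin.last n) *
      Equiv.swap (Fin.castSucc v) (Fin.last n)) = Equiv.swap v u := by
  have hne : ∀ w : Fin n, Fin.castSucc w ≠ Fin.last n := fun w => (Fin.castSucc_lt_last w).ne
  have hcne : Fin.castSucc u ≠ Fin.castSucc v := fun hc => huv (Fin.castSucc_inj.mp hc)
  refine Equiv.ext fun k => ?_
  rw [← Fin.castSucc_inj]
  by_cases hkv : k = v
  · subst hkv
    have h1 : (Equiv.swap (Fin.castSucc u) (Fin.last n) *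
        Equiv.swap (Fin.castSucc k) (Fin.last n)) (Fin.castSucc k) = Fin.castSucc u := by
      rw [Equiv.Perm.mul_apply, Equiv.swap_apply_left, Equiv.swap_apply_right]
    rw [reduceLast_apply_ne _ _ (by rw [h1]; exact hne u), h1, Equiv.swap_apply_left]
  · by_cases hku : k = u
    · subst hku
      have h1 : (Equiv.swap (Fin.castSucc k) (Fin.last n) *
          Equiv.swap (Fin.castSucc v) (Fin.last n)) (Fin.castSucc k) = Fin.last n := by
        rw [Equiv.Perm.mul_apply,
          Equiv.swap_apply_of_ne_of_ne (fun hc => huv (Fin.castSucc_inj.mp hc)) (hne k),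
          Equiv.swap_apply_left]
      rw [reduceLast_apply_eq _ _ h1, Equiv.Perm.mul_apply, Equiv.swap_apply_right,
        Equiv.swap_apply_right, Equiv.swap_apply_of_ne_of_ne hcne.symm (hne v)]
    · have h2 : Fin.castSucc k ≠ Fin.castSucc v := fun hc => hkv (Fin.castSucc_inj.mp hc)
      have h3 : Fin.castSucc k ≠ Fin.castSucc u := fun hc => hku (Fin.castSucc_inj.mp hc)
      have h1 : (Equiv.swap (Fin.castSucc u) (Fin.last n) *
          Equiv.swap (Fin.castSucc v) (Fin.last n)) (Fin.castSucc k) = Fin.castSucc k := by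
        rw [Equiv.Perm.mul_apply, Equiv.swap_apply_of_ne_of_ne h2 (hne k),
          Equiv.swap_apply_of_ne_of_ne h3 (hne k)]
      rw [reduceLast_apply_ne _ _ (by rw [h1]; exact hne k), h1,
        Equiv.swap_apply_of_ne_of_ne (fun hc => hkv hc) (fun hc => hku hc)]

end PermLemmas2
section AlgebraLayer

open Equiv Fin Polynomial MonoidAlgebra

variable {K : Type} [Field K] {n : ℕ}

/-- `extPerm` as a monoid hom. -/
def extPermHom (n : ℕ) : Equiv.Perm (Fin n) →* Equiv.Perm (Fin (n + 1)) where
  toFun := extPerm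
  map_one' := extPerm_one
  map_mul' := extPerm_mul

/-- The algebra embedding `𝒵_n → 𝒵_{n+1}`. -/
noncomputable def extA (K : Type) [Field K] (n : ℕ) : Zn K n →+* Zn K (n + 1) :=
  MonoidAlgebra.mapDomainRingHom (Polynomial K) (extPermHom n)

lemma extA_single (σ : Equiv.Perm (Fin n)) (r : Polynomial K) :
    extA K n (MonoidAlgebra.single σ r) = MonoidAlgebra.single (extPerm σ) r := by
  simp [extA, extPermHom, MonoidAlgebra.mapDomainRingHom_apply, Finsupp.mapDomain_single]

lemma contractZ_single (τ : Equiv.Perm (Fin (n + 1))) (r : Polynomial K) :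
    contractZ (MonoidAlgebra.single τ r) =
      MonoidAlgebra.single (reduceLast τ)
        ((if τ (Fin.last n) = Fin.last n then (X : Polynomial K) else 1) * r) := by
  unfold contractZ
  rw [MonoidAlgebra.coeff_single]
  exact Finsupp.sum_single_index (by rw [mul_zero]; exact MonoidAlgebra.single_zero _)

lemma contractZ_zero : contractZ (0 : Zn K (n + 1)) = 0 := by
  unfold contractZ
  rw [MonoidAlgebra.coeff_zero]
  exact Finsupp.sum_zero_index

lemma contractZ_add (a b : Zn K (n + 1)) :
    contractZ (a + b) = contractZ a + contractZ b := by
  unfold contractZ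
  rw [MonoidAlgebra.coeff_add]
  refine Finsupp.sum_add_index (fun σ _ => ?_) (fun σ _ p q => ?_)
  · rw [mul_zero]; exact MonoidAlgebra.single_zero _
  · rw [mul_add]; exact MonoidAlgebra.single_add _ _ _

/-- `contractZ` as an additive monoid hom. -/
noncomputable def contractHom (K : Type) [Field K] (n : ℕ) : Zn K (n + 1) →+ Zn K n where
  toFun := contractZ
  map_zero' := contractZ_zero
  map_add' := contractZ_add

lemma contractZ_eq_hom (a : Zn K (n + 1)) : contractZ a = contractHom K n a := rfl

lemma mul_extPerm_last_iff (σ : Equiv.Perm (Fin (n + 1))) (h : Equiv.Perm (Fin n)) :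
    (σ * extPerm h) (Fin.last n) = Fin.last n ↔ σ (Fin.last n) = Fin.last n := by
  rw [Equiv.Perm.mul_apply, extPerm_apply_last]

lemma extPerm_mul_last_iff (g : Equiv.Perm (Fin n)) (σ : Equiv.Perm (Fin (n + 1))) :
    (extPerm g * σ) (Fin.last n) = Fin.last n ↔ σ (Fin.last n) = Fin.last n := by
  rw [Equiv.Perm.mul_apply]
  constructor
  · intro hc
    by_contra hne
    obtain ⟨m, hm⟩ := Fin.exists_castSucc_eq.mpr hne
    rw [← hm, extPerm_apply_castSucc] at hc
    exact (Fin.castSucc_lt_last _).ne hc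
  · intro hc; rw [hc, extPerm_apply_last]

/-- The key bimodule property of the contraction. -/
lemma contractZ_ext_mul_ext (a : Zn K n) (z : Zn K (n + 1)) (b : Zn K n) :
    contractZ (extA K n a * z * extA K n b) = a * contractZ z * b := by
  induction a using MonoidAlgebra.induction_linear with
  | zero => simp [contractZ_eq_hom]
  | add f g hf hg =>
    simp only [contractZ_eq_hom] at hf hg ⊢
    simp only [map_add, add_mul]
    rw [hf, hg]
  | single g p =>
    induction b using MonoidAlgebra.induction_linear with
    | zero => simp [contractZ_eq_hom]
    | add f' g' hf hg =>
      simp only [contractZ_eq_hom] at hf hg ⊢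
      simp only [map_add, mul_add]
      rw [hf, hg]
    | single h q =>
      induction z using MonoidAlgebra.induction_linear with
      | zero => simp [contractZ_eq_hom]
      | add f' g' hf hg =>
        simp only [contractZ_eq_hom] at hf hg ⊢
        simp only [map_add, mul_add, add_mul]
        rw [hf, hg]
      | single τ f =>
        rw [extA_single, extA_single, MonoidAlgebra.single_mul_single,
          MonoidAlgebra.single_mul_single, contractZ_single, contractZ_single,
          MonoidAlgebra.single_mul_single, MonoidAlgebra.single_mul_single,
          reduceLast_mul_extPerm, reduceLast_extPerm_mul]
        simp only [mul_extPerm_last_iff, extPerm_mul_last_iff]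
        congr 1
        ring

end AlgebraLayer
section TableauLayer

open Equiv Fin Polynomial MonoidAlgebra Finset

variable {R : Type} [CommRing R] {m : ℕ} {μ : YoungDiagram}

open Classical in
/-- The row sum `r_T = Σ_{σ ∈ R(T)} [σ]`. -/
noncomputable def rEl (R : Type) [CommRing R] {μ : YoungDiagram} {m : ℕ} (T : SYT μ m) :
    MonoidAlgebra R (Equiv.Perm (Fin m)) :=
  ∑ σ : Equiv.Perm (Fin m), if isRowStab T σ then MonoidAlgebra.single σ 1 else 0

open Classical in
/-- The signed column sum `c_T = Σ_{π ∈ C(T)} sgn(π)[π]`. -/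
noncomputable def cEl (R : Type) [CommRing R] {μ : YoungDiagram} {m : ℕ} (T : SYT μ m) :
    MonoidAlgebra R (Equiv.Perm (Fin m)) :=
  ∑ π : Equiv.Perm (Fin m), if isColStab T π then
    MonoidAlgebra.single π (((Equiv.Perm.sign π : ℤ) : R)) else 0

lemma ySym_eq_cEl_mul_rEl (T : SYT μ m) : ySym R T = cEl R T * rEl R T := by
  rw [ySym, cEl, rEl, Finset.sum_mul_sum, Finset.sum_comm]
  refine Finset.sum_congr rfl fun a _ => Finset.sum_congr rfl fun b _ => ?_
  by_cases h1 : isRowStab T b <;> by_cases h2 : isColStab T a <;>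
    simp [h1, h2, MonoidAlgebra.single_mul_single]

lemma isRowStab_mul {T : SYT μ m} {σ τ : Equiv.Perm (Fin m)}
    (hσ : isRowStab T σ) (hτ : isRowStab T τ) : isRowStab T (σ * τ) := fun k => by
  rw [Equiv.Perm.mul_apply, hσ, hτ]

lemma isColStab_mul {T : SYT μ m} {σ τ : Equiv.Perm (Fin m)}
    (hσ : isColStab T σ) (hτ : isColStab T τ) : isColStab T (σ * τ) := fun k => by
  rw [Equiv.Perm.mul_apply, hσ, hτ]

lemma perm_apply_inv_self {α : Type} (f : Equiv.Perm α) (x : α) : f (f⁻¹ x) = x :=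
  f.apply_symm_apply x

lemma isRowStab_inv {T : SYT μ m} {σ : Equiv.Perm (Fin m)}
    (hσ : isRowStab T σ) : isRowStab T σ⁻¹ := fun k => by
  conv_rhs => rw [← perm_apply_inv_self σ k]
  rw [hσ]

lemma isColStab_inv {T : SYT μ m} {σ : Equiv.Perm (Fin m)}
    (hσ : isColStab T σ) : isColStab T σ⁻¹ := fun k => by
  conv_rhs => rw [← perm_apply_inv_self σ k]
  rw [hσ]

lemma isRowStab_swap {T : SYT μ m} {a b : Fin m}
    (h : (T.toEquiv.symm a).1.1 = (T.toEquiv.symm b).1.1) :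
    isRowStab T (Equiv.swap a b) := fun k => by
  rcases eq_or_ne k a with rfl | hka
  · rw [Equiv.swap_apply_left, h]
  · rcases eq_or_ne k b with rfl | hkb
    · rw [Equiv.swap_apply_right, h]
    · rw [Equiv.swap_apply_of_ne_of_ne hka hkb]

lemma isColStab_swap {T : SYT μ m} {a b : Fin m}
    (h : (T.toEquiv.symm a).1.2 = (T.toEquiv.symm b).1.2) :
    isColStab T (Equiv.swap a b) := fun k => by
  rcases eq_or_ne k a with rfl | hka
  · rw [Equiv.swap_apply_left, h]
  · rcases eq_or_ne k b with rfl | hkb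
    · rw [Equiv.swap_apply_right, h]
    · rw [Equiv.swap_apply_of_ne_of_ne hka hkb]

end TableauLayer

section Transfer

open Equiv Fin

variable {n : ℕ} {μ ν : YoungDiagram} {i j : ℕ}

/-- Box correspondence between `T` and `T'`. -/
lemma box_castSucc (T : SYT μ (n + 1)) (T' : SYT ν n)
    (hν : ν.cells = μ.cells.erase (i, j))
    (hT' : ∀ (c : ℕ × ℕ) (hc : c ∈ ν) (hc' : c ∈ μ),
      ((T'.toEquiv ⟨c, hc⟩ : Fin n) : ℕ) = ((T.toEquiv ⟨c, hc'⟩ : Fin (n + 1)) : ℕ))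
    (k : Fin n) :
    ((T.toEquiv.symm (Fin.castSucc k)) : ℕ × ℕ) = ((T'.toEquiv.symm k) : ℕ × ℕ) := by
  have hc : ((T'.toEquiv.symm k) : ℕ × ℕ) ∈ ν := (T'.toEquiv.symm k).2
  have hc' : ((T'.toEquiv.symm k) : ℕ × ℕ) ∈ μ := by
    have h := (YoungDiagram.mem_cells _).mpr hc
    rw [hν] at h
    exact (YoungDiagram.mem_cells _).mp (Finset.mem_of_mem_erase h)
  have h1 := hT' _ hc hc'
  have e1 : (⟨((T'.toEquiv.symm k) : ℕ × ℕ), hc⟩ : {c // c ∈ ν}) = T'.toEquiv.symm k :=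
    Subtype.ext rfl
  rw [e1, T'.toEquiv.apply_symm_apply] at h1
  have h3 : T.toEquiv ⟨_, hc'⟩ = Fin.castSucc k := Fin.ext (by rw [← h1]; rfl)
  rw [← h3, Equiv.symm_apply_apply]

variable (T : SYT μ (n + 1)) (T' : SYT ν n)
  (hν : ν.cells = μ.cells.erase (i, j))
  (hT' : ∀ (c : ℕ × ℕ) (hc : c ∈ ν) (hc' : c ∈ μ),
      ((T'.toEquiv ⟨c, hc⟩ : Fin n) : ℕ) = ((T.toEquiv ⟨c, hc'⟩ : Fin (n + 1)) : ℕ))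

include hν hT' in
lemma isRowStab_extPerm_iff (σ' : Equiv.Perm (Fin n)) :
    isRowStab T (extPerm σ') ↔ isRowStab T' σ' := by
  constructor
  · intro H k
    have := H (Fin.castSucc k)
    rwa [extPerm_apply_castSucc, box_castSucc T T' hν hT', box_castSucc T T' hν hT'] at this
  · intro H k
    cases k using Fin.lastCases with
    | last => rw [extPerm_apply_last]
    | cast k =>
      rw [extPerm_apply_castSucc]
      have h1 := congrArg Prod.fst (box_castSucc T T' hν hT' (σ' k))
      have h2 := congrArg Prod.fst (box_castSucc T T' hν hT' k)
      rw [h1, h2]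
      exact H k

include hν hT' in
lemma isColStab_extPerm_iff (σ' : Equiv.Perm (Fin n)) :
    isColStab T (extPerm σ') ↔ isColStab T' σ' := by
  constructor
  · intro H k
    have := H (Fin.castSucc k)
    rwa [extPerm_apply_castSucc, box_castSucc T T' hν hT', box_castSucc T T' hν hT'] at this
  · intro H k
    cases k using Fin.lastCases with
    | last => rw [extPerm_apply_last]
    | cast k =>
      rw [extPerm_apply_castSucc]
      have h1 := congrArg Prod.snd (box_castSucc T T' hν hT' (σ' k))
      have h2 := congrArg Prod.snd (box_castSucc T T' hν hT' k)
      rw [h1, h2]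
      exact H k

end Transfer
section Sets

open Equiv Fin Polynomial MonoidAlgebra Finset

variable {n : ℕ} {μ : YoungDiagram}

/-- Entries of `T` lying in row `i`. -/
def Vrow (T : SYT μ (n + 1)) (i : ℕ) : Finset (Fin (n + 1)) :=
  Finset.univ.filter (fun v => (T.toEquiv.symm v).1.1 = i)

/-- Entries of `T` lying in column `j`. -/
def Wcol (T : SYT μ (n + 1)) (j : ℕ) : Finset (Fin (n + 1)) :=
  Finset.univ.filter (fun u => (T.toEquiv.symm u).1.2 = j)

lemma mem_Vrow {T : SYT μ (n + 1)} {i : ℕ} {v : Fin (n + 1)} :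
    v ∈ Vrow T i ↔ (T.toEquiv.symm v).1.1 = i := by
  simp [Vrow]

lemma mem_Wcol {T : SYT μ (n + 1)} {j : ℕ} {u : Fin (n + 1)} :
    u ∈ Wcol T j ↔ (T.toEquiv.symm u).1.2 = j := by
  simp [Wcol]

variable {i j : ℕ} (T : SYT μ (n + 1)) (hij : (T.toEquiv.symm (Fin.last n)).1 = (i, j))

include hij in
lemma corner_mem : (i, j) ∈ μ := by
  have h := (T.toEquiv.symm (Fin.last n)).2
  rwa [hij] at h

include hij in
lemma corner_entry (h : (i, j) ∈ μ) : T.toEquiv ⟨(i, j), h⟩ = Fin.last n := by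
  have : (⟨(i, j), h⟩ : {c // c ∈ μ}) = T.toEquiv.symm (Fin.last n) :=
    Subtype.ext hij.symm
  rw [this, Equiv.apply_symm_apply]

include hij in
lemma last_mem_Vrow : Fin.last n ∈ Vrow T i := by
  rw [mem_Vrow, hij]

include hij in
lemma last_mem_Wcol : Fin.last n ∈ Wcol T j := by
  rw [mem_Wcol, hij]

include hij in
lemma row_bound {v : Fin (n + 1)} (hv : v ∈ Vrow T i) : (T.toEquiv.symm v).1.2 ≤ j := by
  by_contra hgt
  push_neg at hgt
  have hrow := mem_Vrow.mp hv
  have hlt := T.row_lt (T.toEquiv.symm (Fin.last n)) (T.toEquiv.symm v)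
    (by rw [hij]; exact hrow.symm) (by rw [hij]; exact hgt)
  simp only [Equiv.apply_symm_apply] at hlt
  exact absurd hlt (not_lt.mpr (Fin.le_last v))

include hij in
lemma col_bound {u : Fin (n + 1)} (hu : u ∈ Wcol T j) : (T.toEquiv.symm u).1.1 ≤ i := by
  by_contra hgt
  push_neg at hgt
  have hcol := mem_Wcol.mp hu
  have hlt := T.col_lt (T.toEquiv.symm (Fin.last n)) (T.toEquiv.symm u)
    (by rw [hij]; exact hcol.symm) (by rw [hij]; exact hgt)
  simp only [Equiv.apply_symm_apply] at hlt
  exact absurd hlt (not_lt.mpr (Fin.le_last u))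

include hij in
lemma box_of_mem_Vrow_erase {v : Fin (n + 1)} (hv : v ∈ (Vrow T i).erase (Fin.last n)) :
    (T.toEquiv.symm v).1.1 = i ∧ (T.toEquiv.symm v).1.2 < j := by
  obtain ⟨hne, hv'⟩ := Finset.mem_erase.mp hv
  refine ⟨mem_Vrow.mp hv', lt_of_le_of_ne (row_bound T hij hv') ?_⟩
  intro hc
  apply hne
  have hbox : (T.toEquiv.symm v).1 = (i, j) := Prod.ext (mem_Vrow.mp hv') hc
  have := Subtype.ext (hbox.trans hij.symm)
  have h2 := congrArg T.toEquiv this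
  rwa [Equiv.apply_symm_apply, Equiv.apply_symm_apply] at h2

include hij in
lemma box_of_mem_Wcol_erase {u : Fin (n + 1)} (hu : u ∈ (Wcol T j).erase (Fin.last n)) :
    (T.toEquiv.symm u).1.2 = j ∧ (T.toEquiv.symm u).1.1 < i := by
  obtain ⟨hne, hu'⟩ := Finset.mem_erase.mp hu
  refine ⟨mem_Wcol.mp hu', lt_of_le_of_ne (col_bound T hij hu') ?_⟩
  intro hc
  apply hne
  have hbox : (T.toEquiv.symm u).1 = (i, j) := Prod.ext hc (mem_Wcol.mp hu')
  have := Subtype.ext (hbox.trans hij.symm)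
  have h2 := congrArg T.toEquiv this
  rwa [Equiv.apply_symm_apply, Equiv.apply_symm_apply] at h2

include hij in
lemma card_Vrow : (Vrow T i).card = j + 1 := by
  have hs : ∀ c ∈ (Finset.range (j + 1)).image (fun l => (i, l)), c ∈ μ := by
    intro c hc
    obtain ⟨l, hl, rfl⟩ := Finset.mem_image.mp hc
    exact μ.up_left_mem le_rfl (Nat.lt_succ_iff.mp (Finset.mem_range.mp hl)) (corner_mem T hij)
  have hcard : ((Finset.range (j + 1)).image (fun l => (i, l))).card = j + 1 := by
    rw [Finset.card_image_of_injective _ (fun a b hab => (Prod.mk.injEq _ _ _ _).mp hab |>.2),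
      Finset.card_range]
  rw [← hcard]
  refine (Finset.card_bij (fun c hc => T.toEquiv ⟨c, hs c hc⟩) ?_ ?_ ?_).symm
  · intro c hc
    rw [mem_Vrow, Equiv.symm_apply_apply]
    obtain ⟨l, _, rfl⟩ := Finset.mem_image.mp hc
    rfl
  · intro a ha b hb hab
    have := T.toEquiv.injective hab
    exact congrArg Subtype.val this
  · intro v hv
    have hmem : (T.toEquiv.symm v).1 ∈ (Finset.range (j + 1)).image (fun l => (i, l)) :=
      Finset.mem_image.mpr ⟨(T.toEquiv.symm v).1.2,
        Finset.mem_range.mpr (Nat.lt_succ_of_le (row_bound T hij hv)),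
        Prod.ext (mem_Vrow.mp hv).symm rfl⟩
    refine ⟨(T.toEquiv.symm v).1, hmem, ?_⟩
    have heq : (⟨(T.toEquiv.symm v).1, hs _ hmem⟩ : {c // c ∈ μ}) = T.toEquiv.symm v :=
      Subtype.ext rfl
    show T.toEquiv ⟨(T.toEquiv.symm v).1, _⟩ = v
    rw [heq, Equiv.apply_symm_apply]

include hij in
lemma card_Wcol : (Wcol T j).card = i + 1 := by
  have hs : ∀ c ∈ (Finset.range (i + 1)).image (fun r => (r, j)), c ∈ μ := by
    intro c hc
    obtain ⟨r, hr, rfl⟩ := Finset.mem_image.mp hc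
    exact μ.up_left_mem (Nat.lt_succ_iff.mp (Finset.mem_range.mp hr)) le_rfl (corner_mem T hij)
  have hcard : ((Finset.range (i + 1)).image (fun r => (r, j))).card = i + 1 := by
    rw [Finset.card_image_of_injective _ (fun a b hab => (Prod.mk.injEq _ _ _ _).mp hab |>.1),
      Finset.card_range]
  rw [← hcard]
  refine (Finset.card_bij (fun c hc => T.toEquiv ⟨c, hs c hc⟩) ?_ ?_ ?_).symm
  · intro c hc
    rw [mem_Wcol, Equiv.symm_apply_apply]
    obtain ⟨r, _, rfl⟩ := Finset.mem_image.mp hc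
    rfl
  · intro a ha b hb hab
    have := T.toEquiv.injective hab
    exact congrArg Subtype.val this
  · intro u hu
    have hmem : (T.toEquiv.symm u).1 ∈ (Finset.range (i + 1)).image (fun r => (r, j)) :=
      Finset.mem_image.mpr ⟨(T.toEquiv.symm u).1.1,
        Finset.mem_range.mpr (Nat.lt_succ_of_le (col_bound T hij hu)),
        Prod.ext rfl (mem_Wcol.mp hu).symm⟩
    refine ⟨(T.toEquiv.symm u).1, hmem, ?_⟩
    have heq : (⟨(T.toEquiv.symm u).1, hs _ hmem⟩ : {c // c ∈ μ}) = T.toEquiv.symm u :=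
      Subtype.ext rfl
    show T.toEquiv ⟨(T.toEquiv.symm u).1, _⟩ = u
    rw [heq, Equiv.apply_symm_apply]

end Sets
section Decomp

open Equiv Fin Polynomial MonoidAlgebra Finset

variable {K : Type} [Field K] {n : ℕ} {μ ν : YoungDiagram} {i j : ℕ}

/-- `Σ_{v ∈ row i} [swap(v, last)]`. -/
noncomputable def sV (K : Type) [Field K] (T : SYT μ (n + 1)) (i : ℕ) : Zn K (n + 1) :=
  ∑ v ∈ Vrow T i, MonoidAlgebra.single (Equiv.swap v (Fin.last n)) 1

/-- `Σ_{u ∈ col j} sgn(swap(u,last))·[swap(u, last)]`. -/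
noncomputable def sW (K : Type) [Field K] (T : SYT μ (n + 1)) (j : ℕ) : Zn K (n + 1) :=
  ∑ u ∈ Wcol T j, MonoidAlgebra.single (Equiv.swap u (Fin.last n))
    (((Equiv.Perm.sign (Equiv.swap u (Fin.last n)) : ℤ) : Polynomial K))

variable (T : SYT μ (n + 1)) (T' : SYT ν n)
  (hij : (T.toEquiv.symm (Fin.last n)).1 = (i, j))
  (hν : ν.cells = μ.cells.erase (i, j))
  (hT' : ∀ (c : ℕ × ℕ) (hc : c ∈ ν) (hc' : c ∈ μ),
      ((T'.toEquiv ⟨c, hc⟩ : Fin n) : ℕ) = ((T.toEquiv ⟨c, hc'⟩ : Fin (n + 1)) : ℕ))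

include hij in
lemma swap_Vrow_isRowStab {v : Fin (n + 1)} (hv : v ∈ Vrow T i) :
    isRowStab T (Equiv.swap v (Fin.last n)) := by
  refine isRowStab_swap ?_
  rw [mem_Vrow.mp hv, hij]

include hij in
lemma swap_Wcol_isColStab {u : Fin (n + 1)} (hu : u ∈ Wcol T j) :
    isColStab T (Equiv.swap u (Fin.last n)) := by
  refine isColStab_swap ?_
  rw [mem_Wcol.mp hu, hij]

include hij in
lemma apply_last_mem_Vrow {σ : Equiv.Perm (Fin (n + 1))} (hσ : isRowStab T σ) :
    σ (Fin.last n) ∈ Vrow T i := by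
  rw [mem_Vrow, hσ (Fin.last n), hij]

include hij in
lemma inv_last_mem_Wcol {π : Equiv.Perm (Fin (n + 1))} (hπ : isColStab T π) :
    π⁻¹ (Fin.last n) ∈ Wcol T j := by
  rw [mem_Wcol, isColStab_inv hπ (Fin.last n), hij]

open Classical in
include hij hν hT' in
lemma rEl_decomp :
    rEl (Polynomial K) T = sV K T i * extA K n (rEl (Polynomial K) T') := by
  have hLHS : rEl (Polynomial K) T =
      ∑ σ ∈ Finset.univ.filter (fun σ => isRowStab T σ),
        MonoidAlgebra.single σ (1 : Polynomial K) := by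
    rw [rEl, Finset.sum_filter]
  have hext : extA K n (rEl (Polynomial K) T') =
      ∑ σ' ∈ Finset.univ.filter (fun σ' => isRowStab T' σ'),
        MonoidAlgebra.single (extPerm σ') (1 : Polynomial K) := by
    rw [rEl, map_sum, Finset.sum_filter]
    refine Finset.sum_congr rfl fun σ' _ => ?_
    split_ifs with h
    · exact extA_single σ' 1
    · exact map_zero _
  rw [hLHS, hext, sV, Finset.sum_mul_sum]
  simp only [MonoidAlgebra.single_mul_single, one_mul]
  rw [← Finset.sum_product']
  refine Finset.sum_nbij'
    (fun σ => (σ (Fin.last n), reduceLast (Equiv.swap (σ (Fin.last n)) (Fin.last n) * σ)))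
    (fun p => Equiv.swap p.1 (Fin.last n) * extPerm p.2) ?_ ?_ ?_ ?_ ?_
  · intro σ hσ
    have hrow : isRowStab T σ := (Finset.mem_filter.mp hσ).2
    have hmemV := apply_last_mem_Vrow T hij hrow
    refine Finset.mem_product.mpr ⟨hmemV, Finset.mem_filter.mpr ⟨Finset.mem_univ _, ?_⟩⟩
    have hfix : (Equiv.swap (σ (Fin.last n)) (Fin.last n) * σ) (Fin.last n) = Fin.last n := by
      rw [Equiv.Perm.mul_apply, Equiv.swap_apply_left]
    have hrow2 : isRowStab T (Equiv.swap (σ (Fin.last n)) (Fin.last n) * σ) :=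
      isRowStab_mul (swap_Vrow_isRowStab T hij hmemV) hrow
    exact (isRowStab_extPerm_iff T T' hν hT' _).mp (by rwa [extPerm_reduceLast hfix])
  · intro p hp
    obtain ⟨hv, hσ'⟩ := Finset.mem_product.mp hp
    refine Finset.mem_filter.mpr ⟨Finset.mem_univ _, ?_⟩
    exact isRowStab_mul (swap_Vrow_isRowStab T hij hv)
      ((isRowStab_extPerm_iff T T' hν hT' _).mpr (Finset.mem_filter.mp hσ').2)
  · intro σ hσ
    have hfix : (Equiv.swap (σ (Fin.last n)) (Fin.last n) * σ) (Fin.last n) = Fin.last n := by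
      rw [Equiv.Perm.mul_apply, Equiv.swap_apply_left]
    simp only
    rw [extPerm_reduceLast hfix, ← mul_assoc, Equiv.swap_mul_self, one_mul]
  · intro p hp
    have hfix : (Equiv.swap p.1 (Fin.last n) * extPerm p.2) (Fin.last n) = p.1 := by
      rw [Equiv.Perm.mul_apply, extPerm_apply_last, Equiv.swap_apply_right]
    rw [hfix]
    refine Prod.ext rfl ?_
    simp only
    rw [← mul_assoc, Equiv.swap_mul_self, one_mul, reduceLast_extPerm]
  · intro σ hσ
    have hfix : (Equiv.swap (σ (Fin.last n)) (Fin.last n) * σ) (Fin.last n) = Fin.last n := by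
      rw [Equiv.Perm.mul_apply, Equiv.swap_apply_left]
    simp only
    rw [extPerm_reduceLast hfix, ← mul_assoc, Equiv.swap_mul_self, one_mul]

open Classical in
include hij hν hT' in
lemma cEl_decomp :
    cEl (Polynomial K) T = extA K n (cEl (Polynomial K) T') * sW K T j := by
  have hLHS : cEl (Polynomial K) T =
      ∑ π ∈ Finset.univ.filter (fun π => isColStab T π),
        MonoidAlgebra.single π (((Equiv.Perm.sign π : ℤ) : Polynomial K)) := by
    rw [cEl, Finset.sum_filter]
  have hext : extA K n (cEl (Polynomial K) T') =
      ∑ π' ∈ Finset.univ.filter (fun π' => isColStab T' π'),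
        MonoidAlgebra.single (extPerm π') (((Equiv.Perm.sign π' : ℤ) : Polynomial K)) := by
    rw [cEl, map_sum, Finset.sum_filter]
    refine Finset.sum_congr rfl fun π' _ => ?_
    split_ifs with h
    · exact extA_single π' _
    · exact map_zero _
  rw [hLHS, hext, sW, Finset.sum_mul_sum]
  simp only [MonoidAlgebra.single_mul_single]
  rw [← Finset.sum_product']
  refine Finset.sum_nbij'
    (fun π => (reduceLast (π * Equiv.swap (π⁻¹ (Fin.last n)) (Fin.last n)), π⁻¹ (Fin.last n)))
    (fun p => extPerm p.1 * Equiv.swap p.2 (Fin.last n)) ?_ ?_ ?_ ?_ ?_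
  · intro π hπ
    have hcol : isColStab T π := (Finset.mem_filter.mp hπ).2
    have hmemW := inv_last_mem_Wcol T hij hcol
    have hfix : (π * Equiv.swap (π⁻¹ (Fin.last n)) (Fin.last n)) (Fin.last n) = Fin.last n := by
      rw [Equiv.Perm.mul_apply, Equiv.swap_apply_right, perm_apply_inv_self]
    have hcol2 : isColStab T (π * Equiv.swap (π⁻¹ (Fin.last n)) (Fin.last n)) :=
      isColStab_mul hcol (swap_Wcol_isColStab T hij hmemW)
    refine Finset.mem_product.mpr ⟨Finset.mem_filter.mpr ⟨Finset.mem_univ _, ?_⟩, hmemW⟩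
    exact (isColStab_extPerm_iff T T' hν hT' _).mp (by rwa [extPerm_reduceLast hfix])
  · intro p hp
    obtain ⟨hπ', hu⟩ := Finset.mem_product.mp hp
    refine Finset.mem_filter.mpr ⟨Finset.mem_univ _, ?_⟩
    exact isColStab_mul ((isColStab_extPerm_iff T T' hν hT' _).mpr (Finset.mem_filter.mp hπ').2)
      (swap_Wcol_isColStab T hij hu)
  · intro π hπ
    have hfix : (π * Equiv.swap (π⁻¹ (Fin.last n)) (Fin.last n)) (Fin.last n) = Fin.last n := by
      rw [Equiv.Perm.mul_apply, Equiv.swap_apply_right, perm_apply_inv_self]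
    simp only
    rw [extPerm_reduceLast hfix, mul_assoc, Equiv.swap_mul_self, mul_one]
  · intro p hp
    have hinv : (extPerm p.1 * Equiv.swap p.2 (Fin.last n))⁻¹ (Fin.last n) = p.2 := by
      rw [Equiv.Perm.inv_def, Equiv.symm_apply_eq, Equiv.Perm.mul_apply,
        Equiv.swap_apply_left, extPerm_apply_last]
    rw [hinv]
    refine Prod.ext ?_ rfl
    simp only
    rw [mul_assoc, Equiv.swap_mul_self, mul_one, reduceLast_extPerm]
  · intro π hπ
    have hfix : (π * Equiv.swap (π⁻¹ (Fin.last n)) (Fin.last n)) (Fin.last n) = Fin.last n := by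
      rw [Equiv.Perm.mul_apply, Equiv.swap_apply_right, perm_apply_inv_self]
    simp only
    rw [extPerm_reduceLast hfix, mul_assoc, Equiv.swap_mul_self, mul_one]
    congr 1
    have h1 : Equiv.Perm.sign (reduceLast (π * Equiv.swap (π⁻¹ (Fin.last n)) (Fin.last n))) =
        Equiv.Perm.sign π * Equiv.Perm.sign (Equiv.swap (π⁻¹ (Fin.last n)) (Fin.last n)) := by
      rw [← sign_extPerm, extPerm_reduceLast hfix, map_mul]
    have h2 : ((Equiv.Perm.sign (Equiv.swap (π⁻¹ (Fin.last n)) (Fin.last n)) : ℤ) : Polynomial K) *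
        ((Equiv.Perm.sign (Equiv.swap (π⁻¹ (Fin.last n)) (Fin.last n)) : ℤ) : Polynomial K)
        = 1 := by
      rw [← Int.cast_mul, ← Units.val_mul, Int.units_mul_self, Units.val_one, Int.cast_one]
    rw [h1, Units.val_mul, Int.cast_mul, mul_assoc, h2, mul_one]

end Decomp
section Vanish

open Equiv Fin Polynomial MonoidAlgebra Finset

variable {K : Type} [Field K] {n : ℕ} {ν : YoungDiagram}

open Classical in
lemma cEl_mul_colswap (T' : SYT ν n) {t : Equiv.Perm (Fin n)} (ht : isColStab T' t)
    (hsgn : Equiv.Perm.sign t = -1) :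
    cEl (Polynomial K) T' * MonoidAlgebra.single t 1 = - cEl (Polynomial K) T' := by
  rw [cEl, Finset.sum_mul]
  have step2 : ∀ π : Equiv.Perm (Fin n),
      (if isColStab T' π then
        MonoidAlgebra.single π (((Equiv.Perm.sign π : ℤ) : Polynomial K)) else 0) *
        MonoidAlgebra.single t 1 =
      (fun ρ => if isColStab T' ρ then
        - MonoidAlgebra.single ρ (((Equiv.Perm.sign ρ : ℤ) : Polynomial K)) else 0)
        ((Equiv.mulRight t) π) := by
    intro π
    show _ = (if isColStab T' (π * t) then
      - MonoidAlgebra.single (π * t) (((Equiv.Perm.sign (π * t) : ℤ) : Polynomial K)) else 0)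
    by_cases h : isColStab T' π
    · rw [if_pos h, if_pos (isColStab_mul h ht), MonoidAlgebra.single_mul_single, mul_one]
      rw [map_mul, hsgn]
      simp
    · rw [if_neg h, if_neg (fun hc => h ?_), zero_mul]
      have := isColStab_mul hc (isColStab_inv ht)
      rwa [mul_assoc, mul_inv_cancel, mul_one] at this
  rw [Finset.sum_congr rfl (fun π _ => step2 π)]
  rw [Equiv.sum_comp (Equiv.mulRight t) (fun ρ => if isColStab T' ρ then
      - MonoidAlgebra.single ρ (((Equiv.Perm.sign ρ : ℤ) : Polynomial K)) else 0),
    ← Finset.sum_neg_distrib]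
  refine Finset.sum_congr rfl fun ρ _ => ?_
  split_ifs <;> simp

open Classical in
lemma rowswap_mul_rEl (T' : SYT ν n) {t : Equiv.Perm (Fin n)} (ht : isRowStab T' t) :
    MonoidAlgebra.single t (1 : Polynomial K) * rEl (Polynomial K) T' =
      rEl (Polynomial K) T' := by
  rw [rEl, Finset.mul_sum]
  have step : ∀ σ : Equiv.Perm (Fin n),
      MonoidAlgebra.single t (1 : Polynomial K) *
        (if isRowStab T' σ then MonoidAlgebra.single σ (1 : Polynomial K) else 0) =
      (fun ρ => if isRowStab T' ρ then
        MonoidAlgebra.single ρ (1 : Polynomial K) else 0) ((Equiv.mulLeft t) σ) := by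
    intro σ
    show _ = (if isRowStab T' (t * σ) then MonoidAlgebra.single (t * σ) (1 : Polynomial K) else 0)
    by_cases h : isRowStab T' σ
    · rw [if_pos h, if_pos (isRowStab_mul ht h), MonoidAlgebra.single_mul_single, one_mul]
    · rw [if_neg h, if_neg (fun hc => h ?_), mul_zero]
      have := isRowStab_mul (isRowStab_inv ht) hc
      rwa [← mul_assoc, inv_mul_cancel, one_mul] at this
  rw [Finset.sum_congr rfl (fun σ _ => step σ)]
  exact Equiv.sum_comp (Equiv.mulLeft t) (fun ρ => if isRowStab T' ρ then
    MonoidAlgebra.single ρ (1 : Polynomial K) else 0)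

lemma swap_triple {α : Type} [DecidableEq α] {x v u : α} (hxv : x ≠ v) (hxu : x ≠ u)
    (hvu : v ≠ u) :
    Equiv.swap x v * Equiv.swap v u = Equiv.swap v u * Equiv.swap x u := by
  refine Equiv.ext fun k => ?_
  simp only [Equiv.Perm.mul_apply, Equiv.swap_apply_def]
  split_ifs <;> simp_all

lemma eq_zero_of_eq_neg_zn [CharZero K] {m : ℕ} (z : Zn K m) (h : z = -z) : z = 0 := by
  refine MonoidAlgebra.ext (Finsupp.ext fun g => ?_)
  have h1 : z.coeff g = - (z.coeff g) := by
    conv_lhs => rw [h]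
    rfl
  have h3 : (2 : Polynomial K) * z.coeff g = 0 := by
    rw [two_mul]
    nth_rewrite 2 [h1]
    exact add_neg_cancel _
  rcases mul_eq_zero.mp h3 with hc | hc
  · exact absurd hc (by norm_num)
  · exact hc

end Vanish
section KeyVanish

open Equiv Fin Polynomial MonoidAlgebra Finset

variable {K : Type} [Field K] [CharZero K] {n : ℕ} {μ ν : YoungDiagram} {i j : ℕ}
variable (T : SYT μ (n + 1)) (T' : SYT ν n)
  (hij : (T.toEquiv.symm (Fin.last n)).1 = (i, j))
  (hν : ν.cells = μ.cells.erase (i, j))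
  (hT' : ∀ (c : ℕ × ℕ) (hc : c ∈ ν) (hc' : c ∈ μ),
      ((T'.toEquiv ⟨c, hc⟩ : Fin n) : ℕ) = ((T.toEquiv ⟨c, hc'⟩ : Fin (n + 1)) : ℕ))

include hij hν hT' in
lemma key_vanish {u v : Fin (n + 1)} (hu : u ∈ (Wcol T j).erase (Fin.last n))
    (hv : v ∈ (Vrow T i).erase (Fin.last n)) :
    cEl (Polynomial K) T' * MonoidAlgebra.single
      (reduceLast (Equiv.swap u (Fin.last n) * Equiv.swap v (Fin.last n)))
      (1 : Polynomial K) * rEl (Polynomial K) T' = 0 := by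
  have hune : u ≠ Fin.last n := (Finset.mem_erase.mp hu).1
  have hvne : v ≠ Fin.last n := (Finset.mem_erase.mp hv).1
  obtain ⟨u₀, hu₀⟩ := Fin.exists_castSucc_eq.mpr hune
  obtain ⟨v₀, hv₀⟩ := Fin.exists_castSucc_eq.mpr hvne
  obtain ⟨hucol, hult⟩ := box_of_mem_Wcol_erase T hij hu
  obtain ⟨hvrow, hvlt⟩ := box_of_mem_Vrow_erase T hij hv
  have hbu : ((T'.toEquiv.symm u₀) : ℕ × ℕ) = (T.toEquiv.symm u).1 := by
    rw [← box_castSucc T T' hν hT' u₀, hu₀]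
  have hbv : ((T'.toEquiv.symm v₀) : ℕ × ℕ) = (T.toEquiv.symm v).1 := by
    rw [← box_castSucc T T' hν hT' v₀, hv₀]
  have huv : u₀ ≠ v₀ := by
    intro hc
    have huveq : u = v := by rw [← hu₀, ← hv₀, hc]
    rw [huveq] at hucol
    rw [hucol] at hvlt
    exact lt_irrefl _ hvlt
  rw [← hu₀, ← hv₀, reduceLast_swap_mul_swap u₀ v₀ huv]
  have h4μ : ((T.toEquiv.symm u).1.1, (T.toEquiv.symm v).1.2) ∈ μ :=
    μ.up_left_mem (le_of_lt hult) (le_of_lt hvlt) (corner_mem T hij)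
  have h4ν : ((T.toEquiv.symm u).1.1, (T.toEquiv.symm v).1.2) ∈ ν := by
    rw [← YoungDiagram.mem_cells _, hν]
    refine Finset.mem_erase.mpr ⟨?_, (YoungDiagram.mem_cells _).mpr h4μ⟩
    intro hc
    have : (T.toEquiv.symm u).1.1 = i := (Prod.ext_iff.mp hc).1
    rw [this] at hult
    exact lt_irrefl _ hult
  set x := T'.toEquiv ⟨((T.toEquiv.symm u).1.1, (T.toEquiv.symm v).1.2), h4ν⟩ with hx_def
  have hbx : ((T'.toEquiv.symm x) : ℕ × ℕ) =
      ((T.toEquiv.symm u).1.1, (T.toEquiv.symm v).1.2) := by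
    rw [hx_def, Equiv.symm_apply_apply]
  have hxv : x ≠ v₀ := by
    intro hc
    have h1 := congrArg Prod.fst (hbx.symm.trans (congrArg (fun y => ((T'.toEquiv.symm y) : ℕ × ℕ)) hc))
    simp only [hbv] at h1
    rw [hvrow] at h1
    rw [h1] at hult
    exact lt_irrefl _ hult
  have hxu : x ≠ u₀ := by
    intro hc
    have h1 := congrArg Prod.snd (hbx.symm.trans (congrArg (fun y => ((T'.toEquiv.symm y) : ℕ × ℕ)) hc))
    simp only [hbu] at h1
    rw [hucol] at h1
    rw [h1] at hvlt
    exact lt_irrefl _ hvlt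
  have ht₁ : isColStab T' (Equiv.swap x v₀) := by
    refine isColStab_swap ?_
    rw [congrArg Prod.snd hbx, congrArg Prod.snd hbv]
  have ht₂ : isRowStab T' (Equiv.swap x u₀) := by
    refine isRowStab_swap ?_
    rw [congrArg Prod.fst hbx, congrArg Prod.fst hbu]
  have hsgn : Equiv.Perm.sign (Equiv.swap x v₀) = -1 := Equiv.Perm.sign_swap hxv
  have e1 : MonoidAlgebra.single (M := Equiv.Perm (Fin n)) (Equiv.swap v₀ u₀)
      (1 : Polynomial K) =
      MonoidAlgebra.single (Equiv.swap x v₀) 1 *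
        MonoidAlgebra.single (Equiv.swap x v₀ * Equiv.swap v₀ u₀) 1 := by
    rw [MonoidAlgebra.single_mul_single, one_mul, ← mul_assoc, Equiv.swap_mul_self, one_mul]
  have e2 : MonoidAlgebra.single (M := Equiv.Perm (Fin n))
      (Equiv.swap x v₀ * Equiv.swap v₀ u₀) (1 : Polynomial K) =
      MonoidAlgebra.single (Equiv.swap v₀ u₀) 1 * MonoidAlgebra.single (Equiv.swap x u₀) 1 := by
    rw [MonoidAlgebra.single_mul_single, one_mul, swap_triple hxv hxu huv.symm]
  have hchain : cEl (Polynomial K) T' * MonoidAlgebra.single (Equiv.swap v₀ u₀)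
      (1 : Polynomial K) * rEl (Polynomial K) T' =
      - (cEl (Polynomial K) T' * MonoidAlgebra.single (Equiv.swap v₀ u₀)
      (1 : Polynomial K) * rEl (Polynomial K) T') := by
    conv_lhs => rw [e1, e2]
    calc cEl (Polynomial K) T' * (MonoidAlgebra.single (Equiv.swap x v₀) 1 *
          (MonoidAlgebra.single (Equiv.swap v₀ u₀) 1 *
            MonoidAlgebra.single (Equiv.swap x u₀) 1)) * rEl (Polynomial K) T'
        = (cEl (Polynomial K) T' * MonoidAlgebra.single (Equiv.swap x v₀) 1) *
          MonoidAlgebra.single (Equiv.swap v₀ u₀) 1 *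
          (MonoidAlgebra.single (Equiv.swap x u₀) 1 * rEl (Polynomial K) T') := by
          simp only [mul_assoc]
      _ = - (cEl (Polynomial K) T' * MonoidAlgebra.single (Equiv.swap v₀ u₀)
            (1 : Polynomial K) * rEl (Polynomial K) T') := by
          rw [cEl_mul_colswap T' ht₁ hsgn, rowswap_mul_rEl T' ht₂]
          simp only [neg_mul, mul_assoc]
  exact eq_zero_of_eq_neg_zn _ hchain

end KeyVanish
section Middle

open Equiv Fin Polynomial MonoidAlgebra Finset

variable {K : Type} [Field K] {n : ℕ} {μ : YoungDiagram} {i j : ℕ}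
variable (T : SYT μ (n + 1)) (hij : (T.toEquiv.symm (Fin.last n)).1 = (i, j))

include hij in
/-- Computation of the contraction of the middle factor. -/
lemma contract_middle :
    contractZ (sW K T j * sV K T i) =
      MonoidAlgebra.single (1 : Equiv.Perm (Fin n))
        ((X : Polynomial K) + (j : Polynomial K) - (i : Polynomial K)) +
      ∑ u ∈ (Wcol T j).erase (Fin.last n), ∑ v ∈ (Vrow T i).erase (Fin.last n),
        (- MonoidAlgebra.single
            (reduceLast (Equiv.swap u (Fin.last n) * Equiv.swap v (Fin.last n)))
            (1 : Polynomial K)) := by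
  have hswapone : Equiv.swap (Fin.last n) (Fin.last n) = (1 : Equiv.Perm (Fin (n + 1))) :=
    Equiv.swap_self _
  have hred1 : reduceLast (1 : Equiv.Perm (Fin (n + 1))) = 1 := by
    rw [← extPerm_one, reduceLast_extPerm]
  have hprod : sW K T j * sV K T i = ∑ u ∈ Wcol T j, ∑ v ∈ Vrow T i,
      MonoidAlgebra.single (Equiv.swap u (Fin.last n) * Equiv.swap v (Fin.last n))
        (((Equiv.Perm.sign (Equiv.swap u (Fin.last n)) : ℤ) : Polynomial K)) := by
    rw [sW, sV, Finset.sum_mul_sum]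
    simp only [MonoidAlgebra.single_mul_single, mul_one]
  have hcontract : contractZ (sW K T j * sV K T i) = ∑ u ∈ Wcol T j, ∑ v ∈ Vrow T i,
      MonoidAlgebra.single
        (reduceLast (Equiv.swap u (Fin.last n) * Equiv.swap v (Fin.last n)))
        ((if (Equiv.swap u (Fin.last n) * Equiv.swap v (Fin.last n)) (Fin.last n) = Fin.last n
            then (X : Polynomial K) else 1) *
          ((Equiv.Perm.sign (Equiv.swap u (Fin.last n)) : ℤ) : Polynomial K)) := by
    rw [hprod, contractZ_eq_hom, map_sum]
    refine Finset.sum_congr rfl fun u _ => ?_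
    rw [map_sum]
    exact Finset.sum_congr rfl fun v _ => contractZ_single _ _
  rw [hcontract]
  -- split off u = last
  rw [← Finset.insert_erase (last_mem_Wcol T hij), Finset.sum_insert (Finset.notMem_erase _ _)]
  -- split off v = last in the first summand
  rw [← Finset.insert_erase (last_mem_Vrow T hij), Finset.sum_insert (Finset.notMem_erase _ _)]
  -- evaluate the (last, last) term
  have haa : MonoidAlgebra.single
      (reduceLast (Equiv.swap (Fin.last n) (Fin.last n) * Equiv.swap (Fin.last n) (Fin.last n)))
      ((if (Equiv.swap (Fin.last n) (Fin.last n) * Equiv.swap (Fin.last n) (Fin.last n))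
          (Fin.last n) = Fin.last n then (X : Polynomial K) else 1) *
        ((Equiv.Perm.sign (Equiv.swap (Fin.last n) (Fin.last n)) : ℤ) : Polynomial K)) =
      MonoidAlgebra.single (1 : Equiv.Perm (Fin n)) (X : Polynomial K) := by
    rw [hswapone, one_mul, hred1, if_pos (Equiv.Perm.one_apply _), map_one]
    simp
  rw [haa]
  -- evaluate the (last, v) terms
  have hab : ∀ v ∈ (Vrow T i).erase (Fin.last n),
      MonoidAlgebra.single
        (reduceLast (Equiv.swap (Fin.last n) (Fin.last n) * Equiv.swap v (Fin.last n)))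
        ((if (Equiv.swap (Fin.last n) (Fin.last n) * Equiv.swap v (Fin.last n))
            (Fin.last n) = Fin.last n then (X : Polynomial K) else 1) *
          ((Equiv.Perm.sign (Equiv.swap (Fin.last n) (Fin.last n)) : ℤ) : Polynomial K)) =
      MonoidAlgebra.single (1 : Equiv.Perm (Fin n)) (1 : Polynomial K) := by
    intro v hv
    have hvne : v ≠ Fin.last n := (Finset.mem_erase.mp hv).1
    have hcond : (Equiv.swap (Fin.last n) (Fin.last n) * Equiv.swap v (Fin.last n))
        (Fin.last n) ≠ Fin.last n := by
      rw [hswapone, one_mul, Equiv.swap_apply_right]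
      exact hvne
    rw [if_neg hcond, hswapone, one_mul, reduceLast_swap_last, map_one]
    simp
  rw [Finset.sum_congr rfl hab, Finset.sum_const]
  -- evaluate the (u, ⬝) sums
  have hu_inner : ∀ u ∈ (Wcol T j).erase (Fin.last n),
      (∑ v ∈ insert (Fin.last n) ((Vrow T i).erase (Fin.last n)),
        MonoidAlgebra.single
          (reduceLast (Equiv.swap u (Fin.last n) * Equiv.swap v (Fin.last n)))
          ((if (Equiv.swap u (Fin.last n) * Equiv.swap v (Fin.last n)) (Fin.last n) = Fin.last n
              then (X : Polynomial K) else 1) *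
            ((Equiv.Perm.sign (Equiv.swap u (Fin.last n)) : ℤ) : Polynomial K))) =
      MonoidAlgebra.single (1 : Equiv.Perm (Fin n)) (-1 : Polynomial K) +
        ∑ v ∈ (Vrow T i).erase (Fin.last n),
          (- MonoidAlgebra.single
            (reduceLast (Equiv.swap u (Fin.last n) * Equiv.swap v (Fin.last n)))
            (1 : Polynomial K)) := by
    intro u hu
    have hune : u ≠ Fin.last n := (Finset.mem_erase.mp hu).1
    have hsgnu : ((Equiv.Perm.sign (Equiv.swap u (Fin.last n)) : ℤ) : Polynomial K) = -1 := by
      rw [Equiv.Perm.sign_swap hune]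
      simp
    rw [Finset.sum_insert (Finset.notMem_erase _ _)]
    congr 1
    · -- the v = last term
      have hcond : (Equiv.swap u (Fin.last n) * Equiv.swap (Fin.last n) (Fin.last n))
          (Fin.last n) ≠ Fin.last n := by
        rw [hswapone, mul_one, Equiv.swap_apply_right]
        exact hune
      rw [if_neg hcond, hswapone, mul_one, reduceLast_swap_last, hsgnu, one_mul]
    · -- the main terms
      refine Finset.sum_congr rfl fun v hv => ?_
      have hvne : v ≠ Fin.last n := (Finset.mem_erase.mp hv).1
      have hvu : v ≠ u := by
        intro hc
        have h1 := mem_Wcol.mp (Finset.mem_erase.mp hu).2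
        have h2 := (box_of_mem_Vrow_erase T hij hv).2
        rw [hc, h1] at h2
        exact lt_irrefl _ h2
      have hcond : (Equiv.swap u (Fin.last n) * Equiv.swap v (Fin.last n))
          (Fin.last n) ≠ Fin.last n := by
        rw [Equiv.Perm.mul_apply, Equiv.swap_apply_right,
          Equiv.swap_apply_of_ne_of_ne hvu hvne]
        exact hvne
      rw [if_neg hcond, hsgnu, one_mul]
      exact MonoidAlgebra.single_neg _ _
  rw [Finset.sum_congr rfl hu_inner, Finset.sum_add_distrib, Finset.sum_const]
  -- cardinalities
  have hcardV : ((Vrow T i).erase (Fin.last n)).card = j := by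
    rw [Finset.card_erase_of_mem (last_mem_Vrow T hij), card_Vrow T hij]
    omega
  have hcardW : ((Wcol T j).erase (Fin.last n)).card = i := by
    rw [Finset.card_erase_of_mem (last_mem_Wcol T hij), card_Wcol T hij]
    omega
  rw [hcardV, hcardW]
  -- collect the singles
  have hjsmul : (j • MonoidAlgebra.single (1 : Equiv.Perm (Fin n)) (1 : Polynomial K)) =
      MonoidAlgebra.single (1 : Equiv.Perm (Fin n)) ((j : ℕ) : Polynomial K) := by
    rw [MonoidAlgebra.smul_single]
    congr 1
    simp
  have hismul : (i • MonoidAlgebra.single (1 : Equiv.Perm (Fin n)) (-1 : Polynomial K)) =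
      MonoidAlgebra.single (1 : Equiv.Perm (Fin n)) (-((i : ℕ) : Polynomial K)) := by
    rw [MonoidAlgebra.smul_single]
    congr 1
    simp
  rw [hjsmul, hismul, Finset.erase_insert (Finset.notMem_erase _ _),
    Finset.erase_insert (Finset.notMem_erase _ _), ← add_assoc, ← MonoidAlgebra.single_add,
    ← MonoidAlgebra.single_add, sub_eq_add_neg]
end Middle
theorem stmt1 (K : Type) [Field K] [CharZero K] (n : ℕ)
    (μ : YoungDiagram) (hμ : μ.card = n + 1) (T : SYT μ (n + 1))
    (i j : ℕ) (hij : (T.toEquiv.symm (Fin.last n)).1 = (i, j))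
    (ν : YoungDiagram) (hν : ν.cells = μ.cells.erase (i, j))
    (T' : SYT ν n)
    (hT' : ∀ (c : ℕ × ℕ) (hc : c ∈ ν) (hc' : c ∈ μ),
      ((T'.toEquiv ⟨c, hc⟩ : Fin n) : ℕ) = ((T.toEquiv ⟨c, hc'⟩ : Fin (n + 1)) : ℕ)) :
    contractZ (ySym (Polynomial K) T) =
      ((X : Polynomial K) + (j : Polynomial K) - (i : Polynomial K)) • ySym (Polynomial K) T' := by
  classical
  have hsone : ∀ (p : Polynomial K) (a b : Zn K n),
      a * MonoidAlgebra.single (1 : Equiv.Perm (Fin n)) p * b = p • (a * b) := by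
    intro p a b
    have h1 : MonoidAlgebra.single (1 : Equiv.Perm (Fin n)) p = p • (1 : Zn K n) := by
      rw [MonoidAlgebra.one_def, MonoidAlgebra.smul_single', mul_one]
    rw [h1, mul_smul_comm, mul_one, smul_mul_assoc]
  rw [ySym_eq_cEl_mul_rEl (T := T), ySym_eq_cEl_mul_rEl (T := T'),
    cEl_decomp T T' hij hν hT', rEl_decomp T T' hij hν hT']
  have hassoc : extA K n (cEl (Polynomial K) T') * sW K T j *
      (sV K T i * extA K n (rEl (Polynomial K) T')) =
      extA K n (cEl (Polynomial K) T') * (sW K T j * sV K T i) *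
        extA K n (rEl (Polynomial K) T') := by
    simp only [mul_assoc]
  rw [hassoc, contractZ_ext_mul_ext, contract_middle T hij, mul_add, add_mul]
  have hzero : cEl (Polynomial K) T' *
      (∑ u ∈ (Wcol T j).erase (Fin.last n), ∑ v ∈ (Vrow T i).erase (Fin.last n),
        (- MonoidAlgebra.single
            (reduceLast (Equiv.swap u (Fin.last n) * Equiv.swap v (Fin.last n)))
            (1 : Polynomial K))) * rEl (Polynomial K) T' = 0 := by
    rw [Finset.mul_sum, Finset.sum_mul]
    refine Finset.sum_eq_zero fun u hu => ?_
    rw [Finset.mul_sum, Finset.sum_mul]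
    refine Finset.sum_eq_zero fun v hv => ?_
    rw [mul_neg, neg_mul, key_vanish T T' hij hν hT' hu hv, neg_zero]
  rw [hzero, add_zero, hsone]
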